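/- arXiv:2211.12236 — 3 statements merged into one kernel-verified Lean document; each statement's English description precedes it below -/
import Mathlib

section
/- Let B be a Banach space of holomorphic functions on a domain Ω with bounded point evaluations K_z. If (z_k) ⊆ Ω is a sequence converging to a point w ∈ Ω, then ‖K_{z_k} − K_w‖ → 0 in the norm of B*. -/
/-!
Banach–Steinhaus turns the pointwise boundedness of the holomorphic functions `ev f` on a compact
ball around `w` into a uniform bound `‖K ζ‖ ≤ M` there. Applied to each `ζ ↦ K ζ f`, the Schwarz
lemma then gives `‖K ζ - K w‖ ≤ (2M / r) ‖ζ - w‖`, so `ζ ↦ K ζ` is continuous at `w` in operator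
norm.
-/

open Filter Topology Metric Set

theorem exists_opNorm_le_of_isCompact_of_continuousOn_apply {𝕜 X B F : Type*}
    [NontriviallyNormedField 𝕜] [TopologicalSpace X]
    [NormedAddCommGroup B] [NormedSpace 𝕜 B] [CompleteSpace B]
    [NormedAddCommGroup F] [NormedSpace 𝕜 F]
    {K : X → B →L[𝕜] F} {S : Set X} (hS : IsCompact S)
    (hK : ∀ f, ContinuousOn (fun x => K x f) S) :
    ∃ M, ∀ x ∈ S, ‖K x‖ ≤ M := by
  obtain ⟨M, hM⟩ : ∃ M, ∀ x : S, ‖K x‖ ≤ M := banach_steinhaus fun f => by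
    obtain ⟨C, hC⟩ := hS.exists_bound_of_continuousOn (hK f)
    exact ⟨C, fun x => hC x x.2⟩
  exact ⟨M, fun x hx => hM ⟨x, hx⟩⟩

section Holomorphic

variable {E B F : Type*} [NormedAddCommGroup E] [NormedSpace ℂ E]
  [NormedAddCommGroup B] [NormedSpace ℂ B] [NormedAddCommGroup F] [NormedSpace ℂ F]

theorem dist_le_div_mul_dist_of_norm_le_on_ball {f : E → F} {c z : E} {r C : ℝ}
    (hf : DifferentiableOn ℂ f (ball c r)) (hC : ∀ x ∈ ball c r, ‖f x‖ ≤ C)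
    (hz : z ∈ ball c r) :
    dist (f z) (f c) ≤ 2 * C / r * dist z c := by
  have hc : c ∈ ball c r := mem_ball_self (nonempty_ball.mp ⟨z, hz⟩)
  refine Complex.dist_le_div_mul_dist_of_mapsTo_ball hf (fun x hx => ?_) hz
  rw [mem_closedBall, dist_eq_norm, two_mul]
  exact (norm_sub_le _ _).trans (add_le_add (hC x hx) (hC c hc))

theorem dist_le_div_mul_dist_of_opNorm_le_on_ball {K : E → B →L[ℂ] F} {c z : E} {r M : ℝ}
    (hK : ∀ f, DifferentiableOn ℂ (fun x => K x f) (ball c r))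
    (hM : ∀ x ∈ ball c r, ‖K x‖ ≤ M) (hz : z ∈ ball c r) :
    dist (K z) (K c) ≤ 2 * M / r * dist z c := by
  have hr : 0 < r := nonempty_ball.mp ⟨z, hz⟩
  have hM₀ : 0 ≤ M := (norm_nonneg _).trans (hM c (mem_ball_self hr))
  rw [dist_eq_norm]
  refine ContinuousLinearMap.opNorm_le_bound _ (by positivity) fun f => ?_
  have hKf : ∀ x ∈ ball c r, ‖K x f‖ ≤ M * ‖f‖ := fun x hx =>
    ((K x).le_opNorm f).trans (mul_le_mul_of_nonneg_right (hM x hx) (norm_nonneg f))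
  calc ‖(K z - K c) f‖ = dist (K z f) (K c f) := by
        rw [sub_apply, dist_eq_norm]
    _ ≤ 2 * (M * ‖f‖) / r * dist z c := dist_le_div_mul_dist_of_norm_le_on_ball (hK f) hKf hz
    _ = 2 * M / r * dist z c * ‖f‖ := by ring

theorem continuousAt_of_forall_differentiableOn_apply [ProperSpace E] [CompleteSpace B]
    {K : E → B →L[ℂ] F} {U : Set E} (hU : IsOpen U)
    (hK : ∀ f, DifferentiableOn ℂ (fun x => K x f) U) {w : E} (hw : w ∈ U) :
    ContinuousAt K w := by
  obtain ⟨r, hr, hrU⟩ := nhds_basis_closedBall.mem_iff.mp (hU.mem_nhds hw)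
  obtain ⟨M, hM⟩ := exists_opNorm_le_of_isCompact_of_continuousOn_apply (isCompact_closedBall w r)
    fun f => (hK f).continuousOn.mono hrU
  have hKball : ∀ f, DifferentiableOn ℂ (fun x => K x f) (ball w r) := fun f =>
    (hK f).mono (ball_subset_closedBall.trans hrU)
  exact continuousAt_of_locally_lipschitz hr (2 * M / r) fun ζ hζ =>
    dist_le_div_mul_dist_of_opNorm_le_on_ball hKball
      (fun x hx => hM x (ball_subset_closedBall hx)) hζ

end Holomorphic

theorem stmt_5_general {n : ℕ} (Ω : Set (Fin n → ℂ)) (hΩ : IsOpen Ω)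
    (B : Type*) [NormedAddCommGroup B] [NormedSpace ℂ B] [CompleteSpace B]
    (ev : B →ₗ[ℂ] ((Fin n → ℂ) → ℂ))
    (hHol : ∀ f : B, DifferentiableOn ℂ (ev f) Ω)
    (K : (Fin n → ℂ) → (B →L[ℂ] ℂ))
    (hK : ∀ z ∈ Ω, ∀ f : B, K z f = ev f z)
    (z : ℕ → (Fin n → ℂ))
    (w : Fin n → ℂ) (hw : w ∈ Ω) (hconv : Tendsto z atTop (nhds w)) :
    Tendsto (fun k => ‖K (z k) - K w‖) atTop (nhds 0) := by
  have hKhol : ∀ f, DifferentiableOn ℂ (fun x => K x f) Ω := fun f =>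
    (hHol f).congr fun x hx => hK x hx f
  have hKw : ContinuousAt K w := continuousAt_of_forall_differentiableOn_apply hΩ hKhol hw
  exact tendsto_iff_norm_sub_tendsto_zero.mp (hKw.tendsto.comp hconv)

/-- If (z_k) ⊆ Ω converges to w ∈ Ω, then the evaluation functionals
converge in operator norm: ‖K_{z_k} − K_w‖ → 0. -/
theorem stmt_5 {n : ℕ} (Ω : Set (Fin n → ℂ)) (hΩ : IsOpen Ω) (hconn : IsConnected Ω)
    (B : Type*) [NormedAddCommGroup B] [NormedSpace ℂ B] [CompleteSpace B]
    (ev : B →ₗ[ℂ] ((Fin n → ℂ) → ℂ))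
    (hHol : ∀ f : B, DifferentiableOn ℂ (ev f) Ω)
    (K : (Fin n → ℂ) → (B →L[ℂ] ℂ))
    (hK : ∀ z ∈ Ω, ∀ f : B, K z f = ev f z)
    (z : ℕ → (Fin n → ℂ)) (hz : ∀ k, z k ∈ Ω)
    (w : Fin n → ℂ) (hw : w ∈ Ω) (hconv : Tendsto z atTop (nhds w)) :
    Tendsto (fun k => ‖K (z k) - K w‖) atTop (nhds 0) :=
  stmt_5_general Ω hΩ B ev hHol K hK z w hw hconv
end

section
/- Let Ω = {z ∈ ℂ : 0 < |z| < 1} be the punctured unit disc. Then every automorphism of Ω is a rotation: φ ∈ Aut(Ω) if and only if there exists λ ∈ ℂ with |λ| = 1 such that φ(z) = λz for all z ∈ Ω. -/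
/-!
By the removable singularity theorem, an automorphism φ of the punctured disc and its inverse ψ
extend to holomorphic maps F, G of the disc into the closed disc; since they are not constant, the
maximum modulus principle puts their values in the open disc. By continuity G (F 0) = 0, which
forces F 0 = 0 because G maps the punctured disc into itself; likewise G 0 = 0. Schwarz's lemma
for F and G gives ‖z‖ = ‖G (F z)‖ ≤ ‖F z‖ ≤ ‖z‖, and its equality case makes F a rotation.
-/

open Set Metric Filter Topology

section

variable {E : Type*} [NormedAddCommGroup E] [NormedSpace ℂ E]

theorem exists_differentiableOn_eqOn_of_mapsTo_diff_singleton [CompleteSpace E] {f : ℂ → E}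
    {s : Set ℂ} {c : ℂ} {K : Set E} (hs : s ∈ 𝓝 c) (hd : DifferentiableOn ℂ f (s \ {c}))
    (hK : Bornology.IsBounded K) (hKc : IsClosed K) (hf : MapsTo f (s \ {c}) K) :
    ∃ F : ℂ → E, DifferentiableOn ℂ F s ∧ EqOn F f (s \ {c}) ∧ MapsTo F s K := by
  set F := Function.update f c (limUnder (𝓝[≠] c) f)
  have hFf : EqOn F f (s \ {c}) := fun z hz => Function.update_of_ne hz.2 _ _
  have hbdd : BddAbove (norm ∘ f '' (s \ {c})) := by
    obtain ⟨C, hC⟩ := hK.exists_norm_le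
    exact ⟨C, forall_mem_image.2 fun z hz => hC _ (hf hz)⟩
  have hFd : DifferentiableOn ℂ F s :=
    Complex.differentiableOn_update_limUnder_of_bddAbove hs hd hbdd
  refine ⟨F, hFd, hFf, fun z hz => ?_⟩
  rcases eq_or_ne z c with rfl | hzc
  · have hlim : Tendsto F (𝓝[≠] z) (𝓝 (F z)) :=
      ((hFd.differentiableAt hs).continuousAt.tendsto).mono_left nhdsWithin_le_nhds
    refine hKc.mem_of_tendsto hlim ?_
    filter_upwards [sdiff_mem_nhdsWithin_compl hs {z}] with w hw
    exact hFf hw ▸ hf hw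
  · exact hFf ⟨hz, hzc⟩ ▸ hf ⟨hz, hzc⟩

theorem mapsTo_ball_of_mapsTo_closedBall {F : Type*} [NormedAddCommGroup F] [NormedSpace ℂ F]
    [StrictConvexSpace ℝ F] {f : E → F} {U : Set E} {R : ℝ} (hU : IsPreconnected U)
    (hUo : IsOpen U) (hd : DifferentiableOn ℂ f U) (hf : MapsTo f U (closedBall 0 R)) {a b : E}
    (ha : a ∈ U) (hb : b ∈ U) (hab : f a ≠ f b) : MapsTo f U (ball 0 R) := by
  intro z hz
  rw [mem_ball_zero_iff]
  by_contra! hR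
  have hmax : IsMaxOn (norm ∘ f) U z := fun w hw => (mem_closedBall_zero_iff.1 (hf hw)).trans hR
  have hconst := Complex.eqOn_of_isPreconnected_of_isMaxOn_norm hU hUo hd hz hmax
  exact hab ((hconst ha).trans (hconst hb).symm)

end

theorem eq_of_leftInvOn_diff_singleton {X : Type*} [TopologicalSpace X] [T2Space X]
    {F G : X → X} {s : Set X} {c : X} [(𝓝[≠] c).NeBot] (hs : IsOpen s) (hc : c ∈ s)
    (hF : ContinuousOn F s) (hG : ContinuousOn G s) (hGF : LeftInvOn G F (s \ {c}))
    (hFc : F c ∈ s) (hGs : MapsTo G (s \ {c}) {c}ᶜ) : F c = c := by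
  have hGF_cont : ContinuousAt (G ∘ F) c :=
    (hG.continuousAt (hs.mem_nhds hFc)).comp (hF.continuousAt (hs.mem_nhds hc))
  have hGFc : G (F c) = c :=
    tendsto_nhds_unique_of_eventuallyEq (hGF_cont.tendsto.mono_left nhdsWithin_le_nhds)
      (tendsto_id.mono_left nhdsWithin_le_nhds)
      (eventually_of_mem (sdiff_mem_nhdsWithin_compl (hs.mem_nhds hc) {c}) fun _ hz => hGF hz)
  by_contra hne
  exact hGs ⟨hFc, hne⟩ hGFc

theorem exists_eqOn_const_mul_of_apply_apply_eq {F G : ℂ → ℂ} {R : ℝ} {z₀ : ℂ}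
    (hF : DifferentiableOn ℂ F (ball 0 R)) (hFmaps : MapsTo F (ball 0 R) (ball 0 R))
    (hF0 : F 0 = 0) (hG : DifferentiableOn ℂ G (ball 0 R))
    (hGmaps : MapsTo G (ball 0 R) (ball 0 R)) (hG0 : G 0 = 0) (hz₀ : z₀ ∈ ball 0 R)
    (hz₀0 : z₀ ≠ 0) (hGF : G (F z₀) = z₀) :
    ∃ lam : ℂ, ‖lam‖ = 1 ∧ EqOn F (fun z => lam * z) (ball 0 R) := by
  have hR : 0 < R := nonempty_ball.1 ⟨z₀, hz₀⟩
  have schwarz {f : ℂ → ℂ} (hf : DifferentiableOn ℂ f (ball 0 R))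
      (hfmaps : MapsTo f (ball 0 R) (ball 0 R)) (hf0 : f 0 = 0) {z : ℂ} (hz : z ∈ ball 0 R) :
      ‖f z‖ ≤ ‖z‖ :=
    Complex.norm_le_norm_of_mapsTo_ball hf (hfmaps.mono_right ball_subset_closedBall) hf0
      (mem_ball_zero_iff.1 hz)
  have hnorm : ‖F z₀‖ = ‖z₀‖ := by
    refine le_antisymm (schwarz hF hFmaps hF0 hz₀) ?_
    calc ‖z₀‖ = ‖G (F z₀)‖ := by rw [hGF]
      _ ≤ ‖F z₀‖ := schwarz hG hGmaps hG0 (hFmaps hz₀)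
  have hslope : ‖dslope F 0 z₀‖ = R / R := by
    rw [dslope_of_ne _ hz₀0, slope_def_field, hF0, sub_zero, sub_zero, norm_div, hnorm,
      div_self (norm_ne_zero_iff.2 hz₀0), div_self hR.ne']
  obtain ⟨lam, hlam, hFlam⟩ :=
    Complex.affine_of_mapsTo_ball_of_exists_norm_dslope_eq_div' hF
    (by rw [hF0]; exact hFmaps.mono_right ball_subset_closedBall) ⟨z₀, hz₀, hslope⟩
  refine ⟨lam, hlam.trans (div_self hR.ne'), fun z hz => ?_⟩
  simpa [hF0, mul_comm] using hFlam hz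

theorem puncturedDisc_eq : {z : ℂ | 0 < ‖z‖ ∧ ‖z‖ < 1} = ball 0 1 \ {0} := by
  ext z
  simp [norm_pos_iff, and_comm]

theorem exists_extension_of_injOn_puncturedDisc {φ : ℂ → ℂ}
    (hd : DifferentiableOn ℂ φ (ball 0 1 \ {0})) (hmaps : MapsTo φ (ball 0 1 \ {0}) (ball 0 1))
    (hinj : InjOn φ (ball 0 1 \ {0})) :
    ∃ F : ℂ → ℂ, DifferentiableOn ℂ F (ball 0 1) ∧ EqOn F φ (ball 0 1 \ {0}) ∧
      MapsTo F (ball 0 1) (ball 0 1) := by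
  obtain ⟨F, hF, hFφ, hFmaps⟩ := exists_differentiableOn_eqOn_of_mapsTo_diff_singleton
    (ball_mem_nhds 0 one_pos) hd isBounded_closedBall isClosed_closedBall
    (hmaps.mono_right ball_subset_closedBall)
  have h₁ : (1 / 2 : ℂ) ∈ ball 0 1 \ {0} := by norm_num
  have h₂ : (1 / 4 : ℂ) ∈ ball 0 1 \ {0} := by norm_num
  have hne : F (1 / 2) ≠ F (1 / 4) := by
    rw [hFφ h₁, hFφ h₂]
    exact hinj.ne h₁ h₂ (by norm_num)
  exact ⟨F, hF, hFφ, mapsTo_ball_of_mapsTo_closedBall (convex_ball 0 1).isPreconnected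
    isOpen_ball hF hFmaps h₁.1 h₂.1 hne⟩

theorem exists_eqOn_const_mul_of_invOn_puncturedDisc {φ ψ : ℂ → ℂ}
    (hφ : DifferentiableOn ℂ φ (ball 0 1 \ {0})) (hψ : DifferentiableOn ℂ ψ (ball 0 1 \ {0}))
    (hφΩ : MapsTo φ (ball 0 1 \ {0}) (ball 0 1 \ {0}))
    (hψΩ : MapsTo ψ (ball 0 1 \ {0}) (ball 0 1 \ {0}))
    (hψφ : LeftInvOn ψ φ (ball 0 1 \ {0})) (hφψ : LeftInvOn φ ψ (ball 0 1 \ {0})) :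
    ∃ lam : ℂ, ‖lam‖ = 1 ∧ EqOn φ (fun z => lam * z) (ball 0 1 \ {0}) := by
  obtain ⟨F, hF, hFφ, hFmaps⟩ :=
    exists_extension_of_injOn_puncturedDisc hφ (hφΩ.mono_right sdiff_subset) hψφ.injOn
  obtain ⟨G, hG, hGψ, hGmaps⟩ :=
    exists_extension_of_injOn_puncturedDisc hψ (hψΩ.mono_right sdiff_subset) hφψ.injOn
  have hGF : LeftInvOn G F (ball 0 1 \ {0}) := (hψφ.congr_left hφΩ hGψ.symm).congr_right hFφ.symm
  have hFG : LeftInvOn F G (ball 0 1 \ {0}) := (hφψ.congr_left hψΩ hFφ.symm).congr_right hGψ.symm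
  have h0 : (0 : ℂ) ∈ ball 0 1 := mem_ball_self one_pos
  have hF0 : F 0 = 0 := eq_of_leftInvOn_diff_singleton isOpen_ball h0 hF.continuousOn
    hG.continuousOn hGF (hFmaps h0) ((hψΩ.congr hGψ.symm).mono_right (sdiff_subset_compl _ _))
  have hG0 : G 0 = 0 := eq_of_leftInvOn_diff_singleton isOpen_ball h0 hG.continuousOn
    hF.continuousOn hFG (hGmaps h0) ((hφΩ.congr hFφ.symm).mono_right (sdiff_subset_compl _ _))
  have h₁ : (1 / 2 : ℂ) ∈ ball 0 1 \ {0} := by norm_num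
  obtain ⟨lam, hlam, hFlam⟩ :=
    exists_eqOn_const_mul_of_apply_apply_eq hF hFmaps hF0 hG hGmaps hG0 h₁.1 h₁.2 (hGF h₁)
  exact ⟨lam, hlam, fun z hz => (hFφ hz).symm.trans (hFlam hz.1)⟩

theorem mapsTo_const_mul_puncturedDisc {c : ℂ} (hc : ‖c‖ = 1) :
    MapsTo (c * ·) (ball (0 : ℂ) 1 \ {0}) (ball 0 1 \ {0}) := fun z hz =>
  ⟨by simpa [hc] using hz.1, mul_ne_zero (norm_ne_zero_iff.1 (hc ▸ one_ne_zero)) hz.2⟩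

/-- Every automorphism of the punctured unit disc
Ω = {z ∈ ℂ : 0 < |z| < 1} is a rotation: a holomorphic self-map φ of Ω is a
(biholomorphic) automorphism of Ω if and only if φ(z) = λz on Ω for some |λ| = 1. -/
theorem stmt_12 (φ : ℂ → ℂ) :
    (DifferentiableOn ℂ φ {z : ℂ | 0 < ‖z‖ ∧ ‖z‖ < 1} ∧
      Set.MapsTo φ {z : ℂ | 0 < ‖z‖ ∧ ‖z‖ < 1} {z : ℂ | 0 < ‖z‖ ∧ ‖z‖ < 1} ∧
      ∃ ψ : ℂ → ℂ, DifferentiableOn ℂ ψ {z : ℂ | 0 < ‖z‖ ∧ ‖z‖ < 1} ∧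
        Set.MapsTo ψ {z : ℂ | 0 < ‖z‖ ∧ ‖z‖ < 1} {z : ℂ | 0 < ‖z‖ ∧ ‖z‖ < 1} ∧
        (∀ z ∈ {z : ℂ | 0 < ‖z‖ ∧ ‖z‖ < 1}, ψ (φ z) = z) ∧
        (∀ z ∈ {z : ℂ | 0 < ‖z‖ ∧ ‖z‖ < 1}, φ (ψ z) = z)) ↔
    ∃ lam : ℂ, ‖lam‖ = 1 ∧ ∀ z ∈ {z : ℂ | 0 < ‖z‖ ∧ ‖z‖ < 1}, φ z = lam * z := by
  rw [puncturedDisc_eq]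
  constructor
  · rintro ⟨hφ, hφΩ, ψ, hψ, hψΩ, hψφ, hφψ⟩
    exact exists_eqOn_const_mul_of_invOn_puncturedDisc hφ hψ hφΩ hψΩ hψφ hφψ
  · rintro ⟨lam, hlam, hφ⟩
    have hlam' : ‖lam⁻¹‖ = 1 := by rw [norm_inv, hlam, inv_one]
    have hlam0 : lam ≠ 0 := norm_ne_zero_iff.1 (hlam ▸ one_ne_zero)
    refine ⟨(differentiableOn_id.const_mul lam).congr hφ,
      (mapsTo_const_mul_puncturedDisc hlam).congr (fun z hz => (hφ z hz).symm),
      (lam⁻¹ * ·), differentiableOn_id.const_mul lam⁻¹, mapsTo_const_mul_puncturedDisc hlam',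
      fun z hz => ?_, fun z hz => ?_⟩
    · rw [hφ z hz]
      exact inv_mul_cancel_left₀ hlam0 z
    · rw [hφ _ (mapsTo_const_mul_puncturedDisc hlam' hz)]
      exact mul_inv_cancel_left₀ hlam0 z
end

section
/- Let B be a Banach space of holomorphic functions on a domain Ω ⊆ ℂⁿ (n > 1) with bounded point evaluations that are nonzero at every point and linearly independent at distinct points. Let ψ be a holomorphic function with M_ψ bounded on B and φ a holomorphic self-map of Ω with C_φ bounded on B. If the weighted composition operator W_{ψ,φ} = M_ψ C_φ is Fredholm on B, then ψ has no zeros in Ω. -/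
/-!
In dimension at least two a holomorphic function has no isolated zeros. Suppose `z₀` were the only
zero of `f` near `z₀`, and restrict `f` to a bidisc `|s|, |t| ≤ r` through `z₀` spanned by two
independent directions. Then `|f| ≥ δ > 0` where `|s| = r`, while `|f(0, t₀)| < δ` for some small
`t₀ ≠ 0`; as `s ↦ f(s, t₀)` has no zero on the disc, the maximum modulus principle for its
reciprocal is violated.

So a zero of `ψ` in `Ω` gives infinitely many zeros `w`. Since `K w ∘ M_ψ = ψ(w) K w = 0`, each
`K w` lies in the kernel of the adjoint of `M_ψ C_φ`, and these evaluations are linearly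
independent, so that kernel is infinite-dimensional.
-/

/-- A bounded operator on a Banach space is Fredholm if it has closed range,
finite-dimensional kernel, and the kernel of its Banach adjoint is finite-dimensional. -/
def IsFredholm {B : Type*} [NormedAddCommGroup B] [NormedSpace ℂ B]
    (T : B →L[ℂ] B) : Prop :=
  IsClosed (Set.range T) ∧ FiniteDimensional ℂ (LinearMap.ker (T : B →ₗ[ℂ] B)) ∧
    FiniteDimensional ℂ
      (LinearMap.ker (((ContinuousLinearMap.compL ℂ B B ℂ).flip T :
        (B →L[ℂ] ℂ) →L[ℂ] B →L[ℂ] ℂ) : (B →L[ℂ] ℂ) →ₗ[ℂ] B →L[ℂ] ℂ))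

open Metric Filter Topology

theorem exists_ne_zero_apply_eq_zero_of_apply_zero_eq_zero {r : ℝ} (hr : 0 < r)
    {g : ℂ × ℂ → ℂ} (hg : ContinuousOn g (closedBall 0 r))
    (hg_fst : ∀ t ∈ closedBall (0 : ℂ) r, DifferentiableOn ℂ (fun s ↦ g (s, t)) (closedBall 0 r))
    (hg₀ : g 0 = 0) :
    ∃ q ∈ closedBall (0 : ℂ × ℂ) r, q ≠ 0 ∧ g q = 0 := by
  by_contra! hne
  have hpolydisc : closedBall (0 : ℂ) r ×ˢ closedBall (0 : ℂ) r = closedBall 0 r :=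
    closedBall_prod_same 0 0 r
  have hS : sphere (0 : ℂ) r ×ˢ closedBall (0 : ℂ) r ⊆ closedBall 0 r :=
    hpolydisc ▸ Set.prod_mono sphere_subset_closedBall le_rfl
  obtain ⟨q₀, hq₀, hmin⟩ := ((isCompact_sphere 0 r).prod (isCompact_closedBall 0 r)).exists_isMinOn
    ((NormedSpace.sphere_nonempty.2 hr.le).prod (nonempty_closedBall.2 hr.le))
    (hg.mono hS).norm
  have hδ : 0 < ‖g q₀‖ := by
    refine norm_pos_iff.2 (hne q₀ (hS hq₀) fun h ↦ ?_)
    have := hq₀.1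
    simp [h, hr.ne] at this
  obtain ⟨t₀, ⟨ht₀_small, ht₀r⟩, ht₀⟩ :
      ∃ t₀ : ℂ, (dist (g (0, t₀)) 0 < ‖g q₀‖ ∧ t₀ ∈ closedBall 0 r) ∧ t₀ ≠ 0 := by
    have hlim : Tendsto (fun t : ℂ ↦ g (0, t)) (𝓝 0) (𝓝 (g 0)) :=
      (hg.continuousAt (closedBall_mem_nhds 0 hr)).tendsto.comp
        (Continuous.tendsto' (by fun_prop) (0 : ℂ) (0 : ℂ × ℂ) rfl)
    rw [hg₀] at hlim
    have := (Metric.tendsto_nhds.1 hlim _ hδ).and (closedBall_mem_nhds (0 : ℂ) hr)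
    exact ((eventually_nhdsWithin_of_eventually_nhds (s := {0}ᶜ) this).and
      eventually_mem_nhdsWithin).exists
  rw [dist_zero_right] at ht₀_small
  have hslice : ∀ s ∈ closedBall (0 : ℂ) r, g (s, t₀) ≠ 0 := fun s hs ↦
    hne _ (hpolydisc ▸ Set.mk_mem_prod hs ht₀r) (by simp [ht₀])
  have hmax : ‖(g (0, t₀))⁻¹‖ ≤ ‖g q₀‖⁻¹ := by
    refine Complex.norm_le_of_forall_mem_frontier_norm_le (f := fun s ↦ (g (s, t₀))⁻¹)
      isBounded_ball (((hg_fst t₀ ht₀r).inv hslice).diffContOnCl_ball subset_rfl) (fun s hs ↦ ?_)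
      (subset_closure (mem_ball_self hr))
    rw [frontier_ball 0 hr.ne'] at hs
    rw [norm_inv]
    exact inv_anti₀ hδ (hmin (Set.mk_mem_prod hs ht₀r))
  rw [norm_inv] at hmax
  exact (inv_strictAnti₀ (norm_pos_iff.2 (hslice 0 (mem_closedBall_self hr.le))) ht₀_small).not_ge hmax

theorem accPt_zeros_of_one_lt_rank {E : Type*} [NormedAddCommGroup E] [NormedSpace ℂ E]
    (hE : 1 < Module.rank ℂ E) {U : Set E} (hU : IsOpen U) {f : E → ℂ}
    (hf : DifferentiableOn ℂ f U) {z₀ : E} (hz₀ : z₀ ∈ U) (hf₀ : f z₀ = 0) :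
    AccPt z₀ (𝓟 {z ∈ U | f z = 0}) := by
  have : Nontrivial E := rank_pos_iff_nontrivial.1 (zero_lt_one.trans hE)
  obtain ⟨e₁, he₁⟩ := exists_ne (0 : E)
  obtain ⟨e₂, he⟩ := exists_linearIndependent_pair_of_one_lt_rank hE he₁
  set p : ℂ × ℂ → E := fun q ↦ z₀ + q.1 • e₁ + q.2 • e₂ with hp
  have hp_cont : Continuous p := by fun_prop
  have hp_eq : ∀ q, p q = z₀ → q = 0 := fun q hq ↦ by
    have := LinearIndependent.pair_iff.1 he q.1 q.2 (by simpa [hp, add_assoc] using hq)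
    exact Prod.ext this.1 this.2
  rw [accPt_iff_frequently]
  intro hev
  have hev' : ∀ᶠ q in 𝓝 (0 : ℂ × ℂ), p q ∈ U ∧ ¬(p q ≠ z₀ ∧ p q ∈ {z ∈ U | f z = 0}) := by
    have hp₀ : p 0 = z₀ := by simp [hp]
    exact (hp_cont.tendsto' 0 z₀ hp₀).eventually ((hU.eventually_mem hz₀).and hev)
  obtain ⟨r, hr, hball⟩ := nhds_basis_closedBall.eventually_iff.1 hev'
  have hslice : ∀ t ∈ closedBall (0 : ℂ) r,
      DifferentiableOn ℂ (fun s ↦ f (p (s, t))) (closedBall 0 r) := fun t ht ↦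
    hf.comp (by fun_prop : Differentiable ℂ fun s ↦ p (s, t)).differentiableOn fun s hs ↦
      (hball ((closedBall_prod_same (0 : ℂ) 0 r).subset (Set.mk_mem_prod hs ht))).1
  obtain ⟨q, hq, hq₀, hfq⟩ := exists_ne_zero_apply_eq_zero_of_apply_zero_eq_zero hr
    (g := f ∘ p) (hf.continuousOn.comp hp_cont.continuousOn fun q hq ↦ (hball hq).1)
    hslice (by simpa [hp] using hf₀)
  exact (hball hq).2 ⟨fun h ↦ hq₀ (hp_eq q h), (hball hq).1, hfq⟩

theorem Submodule.not_finiteDimensional_of_infinite_of_linearIndependent_fin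
    {K V ι : Type*} [DivisionRing K] [AddCommGroup V] [Module K V] {P : Submodule K V}
    {S : Set ι} (hS : S.Infinite) {v : ι → V} (hvP : ∀ i ∈ S, v i ∈ P)
    (hv : ∀ (m : ℕ) (a : Fin m → ι), (∀ k, a k ∈ S) → Function.Injective a →
      LinearIndependent K (v ∘ a)) :
    ¬FiniteDimensional K P := by
  intro hP
  let e := hS.natEmbedding
  let a : Fin (Module.finrank K P + 1) → ι := fun k ↦ e k
  have ha : Function.Injective a := fun k l hkl ↦ Fin.ext (e.injective (Subtype.ext hkl))
  have hli : LinearIndependent K fun k ↦ (⟨v (a k), hvP _ (e k).2⟩ : P) :=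
    .of_comp P.subtype (hv _ a (fun k ↦ (e k).2) ha)
  simpa using hli.fintype_card_le_finrank

theorem stmt_14_general {n : ℕ} (hn : 1 < n)
    (Ω : Set (Fin n → ℂ)) (hΩ : IsOpen Ω)
    (B : Type*) [NormedAddCommGroup B] [NormedSpace ℂ B]
    (ev : B →ₗ[ℂ] ((Fin n → ℂ) → ℂ))
    (K : (Fin n → ℂ) → (B →L[ℂ] ℂ))
    (hK : ∀ z ∈ Ω, ∀ f : B, K z f = ev f z)
    (hsep : ∀ (m : ℕ) (a : Fin m → (Fin n → ℂ)), (∀ i, a i ∈ Ω) →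
      Function.Injective a → LinearIndependent ℂ (fun i => K (a i)))
    (ψ : (Fin n → ℂ) → ℂ) (hψHol : DifferentiableOn ℂ ψ Ω)
    (Mψ : B →L[ℂ] B) (hMψ : ∀ f : B, ∀ z ∈ Ω, ev (Mψ f) z = ψ z * ev f z)
    (Cφ : B →L[ℂ] B)
    (hFred : IsFredholm (Mψ.comp Cφ)) :
    ∀ z ∈ Ω, ψ z ≠ 0 := by
  intro z hz hψz
  have hzeros : {w ∈ Ω | ψ w = 0}.Infinite :=
    .of_accPt (accPt_zeros_of_one_lt_rank (by simpa using hn) hΩ hψHol hz hψz)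
  refine Submodule.not_finiteDimensional_of_infinite_of_linearIndependent_fin hzeros
    (fun w hw ↦ ?_) (fun m a ha ↦ hsep m a fun k ↦ (ha k).1) hFred.2.2
  refine LinearMap.mem_ker.2 (ContinuousLinearMap.ext fun f ↦ ?_)
  simp [hK w hw.1, hMψ _ w hw.1, hw.2]

/-- In dimension n > 1, if the weighted composition operator
W_{ψ,φ} = M_ψ C_φ is Fredholm on a Banach space of holomorphic functions with bounded,
nonzero, linearly independent point evaluations, then ψ has no zeros in Ω. -/
theorem stmt_14 {n : ℕ} (hn : 1 < n)
    (Ω : Set (Fin n → ℂ)) (hΩ : IsOpen Ω) (hconn : IsConnected Ω)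
    (hbdd : Bornology.IsBounded Ω)
    (B : Type*) [NormedAddCommGroup B] [NormedSpace ℂ B] [CompleteSpace B]
    (ev : B →ₗ[ℂ] ((Fin n → ℂ) → ℂ))
    (hHol : ∀ f : B, DifferentiableOn ℂ (ev f) Ω)
    (K : (Fin n → ℂ) → (B →L[ℂ] ℂ))
    (hK : ∀ z ∈ Ω, ∀ f : B, K z f = ev f z)
    (hKne : ∀ z ∈ Ω, K z ≠ 0)
    (hsep : ∀ (m : ℕ) (a : Fin m → (Fin n → ℂ)), (∀ i, a i ∈ Ω) →
      Function.Injective a → LinearIndependent ℂ (fun i => K (a i)))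
    (ψ : (Fin n → ℂ) → ℂ) (hψHol : DifferentiableOn ℂ ψ Ω)
    (Mψ : B →L[ℂ] B) (hMψ : ∀ f : B, ∀ z ∈ Ω, ev (Mψ f) z = ψ z * ev f z)
    (φ : (Fin n → ℂ) → (Fin n → ℂ)) (hφΩ : Set.MapsTo φ Ω Ω)
    (hφHol : DifferentiableOn ℂ φ Ω)
    (Cφ : B →L[ℂ] B) (hCφ : ∀ f : B, ∀ z ∈ Ω, ev (Cφ f) z = ev f (φ z))
    (hFred : IsFredholm (Mψ.comp Cφ)) :
    ∀ z ∈ Ω, ψ z ≠ 0 :=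
  stmt_14_general hn Ω hΩ B ev K hK hsep ψ hψHol Mψ hMψ Cφ hFred
end
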